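/- arXiv:2309.15699 — 6 statements merged into one kernel-verified Lean document; each statement's English description precedes it below -/
import Mathlib

section
/- Let m ≥ 1 be an integer, α ∈ (0,1), and let q_1,…,q_m ∈ [0,1] with ordered values q_(1) ≤ … ≤ q_(m) and q_(0) := 0. Suppose the set J = { i ∈ {1,…,m} : q_(i) ≤ α·i/m } is nonempty and let l* = max J. Define t* = sup{ t ≥ 0 : m·t ≤ α·max(#{s : q_s ≤ t}, 1) }. Then q_(l*) ≤ t*, and if l* < m then t* < q_(l*+1); consequently {s : q_s ≤ t*} = {s : q_s ≤ q_(l*)}. -/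
open scoped BigOperators Classical

/-- Lemma 2 of the paper (deterministic form): the Benjamini–Hochberg step-up
procedure applied to the (rescaled weighted) p-values `q` is equivalent to the
sup-threshold rule with FDP estimate `m·t / max(#{s : q s ≤ t}, 1)`. -/
theorem straw_lemma2 (m : ℕ) (hm : 1 ≤ m) (α : ℝ) (hα : α ∈ Set.Ioo (0 : ℝ) 1)
    (q : Fin m → ℝ) (hq : ∀ s, q s ∈ Set.Icc (0 : ℝ) 1)
    -- `σ` sorts the values: `q (σ i)` is the `(i+1)`-th smallest value `q_(i+1)`.
    (σ : Equiv.Perm (Fin m)) (hσ : Monotone (q ∘ σ))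
    -- `l` is the largest index `i ∈ {1,…,m}` with `q_(i) ≤ α · i / m`.
    (l : Fin m)
    (hl : q (σ l) ≤ α * ((l : ℕ) + 1) / m)
    (hlmax : ∀ i : Fin m, q (σ i) ≤ α * ((i : ℕ) + 1) / m → i ≤ l)
    -- `tstar` is the sup-threshold `t*`.
    (tstar : ℝ)
    (htstar : tstar = sSup {t : ℝ | 0 ≤ t ∧
      (m : ℝ) * t ≤ α * (max (Finset.univ.filter (fun s => q s ≤ t)).card 1 : ℕ)}) :
    q (σ l) ≤ tstar ∧
    (∀ h : (l : ℕ) + 1 < m, tstar < q (σ ⟨(l : ℕ) + 1, h⟩)) ∧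
    {s : Fin m | q s ≤ tstar} = {s : Fin m | q s ≤ q (σ l)} := by
  obtain ⟨hα0, hα1⟩ := hα
  have hm0 : (0:ℝ) < m := by exact_mod_cast hm
  set T : Set ℝ := {t : ℝ | 0 ≤ t ∧
      (m : ℝ) * t ≤ α * (max (Finset.univ.filter (fun s => q s ≤ t)).card 1 : ℕ)} with hT
  -- counting through the permutation σ
  have hcard : ∀ t : ℝ, (Finset.univ.filter (fun s => q s ≤ t)).card
      = (Finset.univ.filter (fun i => q (σ i) ≤ t)).card := by
    intro t
    have himg : Finset.image σ (Finset.univ.filter (fun i => q (σ i) ≤ t))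
        = Finset.univ.filter (fun s => q s ≤ t) := by
      ext s
      simp only [Finset.mem_image, Finset.mem_filter, Finset.mem_univ, true_and]
      constructor
      · rintro ⟨i, hi, rfl⟩; exact hi
      · intro hs; exact ⟨σ.symm s, by simpa using hs, σ.apply_symm_apply s⟩
    rw [← himg, Finset.card_image_of_injective _ σ.injective]
  -- T is bounded above by α(l+1)/m
  have hub : ∀ t ∈ T, t ≤ α * ((l:ℕ)+1) / m := by
    intro t ht
    obtain ⟨ht0, htle⟩ := ht
    rw [hcard t] at htle
    set S := Finset.univ.filter (fun i : Fin m => q (σ i) ≤ t) with hS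
    by_cases hSe : S.Nonempty
    · set k := S.max' hSe with hk
      have hkS : k ∈ S := S.max'_mem hSe
      have hkq : q (σ k) ≤ t := by
        have := Finset.mem_filter.mp hkS; exact this.2
      have hsub : S ⊆ Finset.Iic k := by
        intro i hi; exact Finset.mem_Iic.mpr (S.le_max' i hi)
      have hcardle : S.card ≤ (k:ℕ) + 1 := by
        calc S.card ≤ (Finset.Iic k).card := Finset.card_le_card hsub
        _ = (k:ℕ) + 1 := by simp
      have hN1 : 1 ≤ S.card := Finset.Nonempty.card_pos hSe
      have hmax : max S.card 1 = S.card := max_eq_left hN1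
      rw [hmax] at htle
      have htle' : (m:ℝ) * t ≤ α * ((k:ℕ) + 1) := by
        calc (m:ℝ) * t ≤ α * S.card := htle
        _ ≤ α * ((k:ℕ) + 1) := by
            apply mul_le_mul_of_nonneg_left _ hα0.le
            exact_mod_cast hcardle
      have htk : t ≤ α * ((k:ℕ)+1) / m := by
        rw [le_div_iff₀ hm0]; linarith [htle']
      have hkl : k ≤ l := hlmax k (le_trans hkq htk)
      calc t ≤ α * ((k:ℕ)+1) / m := htk
      _ ≤ α * ((l:ℕ)+1) / m := by
          gcongr
          exact_mod_cast Fin.le_def.mp hkl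
    · have hS0 : S.card = 0 := by
        simp [Finset.not_nonempty_iff_eq_empty.mp hSe]
      rw [hS0] at htle
      simp only [Nat.max_eq_right (le_refl 1), max_eq_right (Nat.zero_le 1),
        Nat.cast_one, mul_one] at htle
      have : t ≤ α / m := by rw [le_div_iff₀ hm0]; linarith
      calc t ≤ α / m := this
      _ ≤ α * ((l:ℕ)+1) / m := by
          gcongr
          nlinarith [(l:ℕ).cast_nonneg (α := ℝ)]
  -- `q (σ l)` belongs to T
  have hmemN : (l:ℕ) + 1 ≤ (Finset.univ.filter (fun s => q s ≤ q (σ l))).card := by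
    rw [hcard]
    have hsub : Finset.Iic l ⊆ Finset.univ.filter (fun i => q (σ i) ≤ q (σ l)) := by
      intro i hi
      simp only [Finset.mem_filter, Finset.mem_univ, true_and]
      exact hσ (Finset.mem_Iic.mp hi)
    calc (l:ℕ) + 1 = (Finset.Iic l).card := by simp
    _ ≤ _ := Finset.card_le_card hsub
  have hmem : q (σ l) ∈ T := by
    constructor
    · exact (hq _).1
    · have h1c : 1 ≤ (Finset.univ.filter (fun s => q s ≤ q (σ l))).card :=
        le_trans (Nat.le_add_left 1 _) hmemN
      rw [max_eq_left h1c]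
      have hml : (m:ℝ) * q (σ l) ≤ α * ((l:ℕ)+1) := by
        rw [le_div_iff₀ hm0] at hl; linarith
      calc (m:ℝ) * q (σ l) ≤ α * ((l:ℕ)+1) := hml
      _ ≤ α * ((Finset.univ.filter (fun s => q s ≤ q (σ l))).card : ℕ) := by
          apply mul_le_mul_of_nonneg_left _ hα0.le
          exact_mod_cast hmemN
  have hne : T.Nonempty := ⟨q (σ l), hmem⟩
  have hbdd : BddAbove T := ⟨_, hub⟩
  have h1 : q (σ l) ≤ tstar := htstar ▸ le_csSup hbdd hmem
  have h2 : tstar ≤ α * ((l:ℕ)+1) / m := htstar ▸ csSup_le hne hub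
  have h3 : ∀ h : (l:ℕ)+1 < m, tstar < q (σ ⟨(l:ℕ)+1, h⟩) := by
    intro h
    have hnot : ¬ ((⟨(l:ℕ)+1, h⟩ : Fin m) ≤ l) := by
      simp [Fin.le_def]
    have hgt : α * (((l:ℕ)+1) + 1) / m < q (σ ⟨(l:ℕ)+1, h⟩) := by
      by_contra hc
      push_neg at hc
      exact hnot (hlmax _ (by exact_mod_cast hc))
    calc tstar ≤ α * ((l:ℕ)+1) / m := h2
    _ < α * (((l:ℕ)+1) + 1) / m := by gcongr; linarith
    _ < q (σ ⟨(l:ℕ)+1, h⟩) := hgt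
  refine ⟨h1, h3, ?_⟩
  ext s
  simp only [Set.mem_setOf_eq]
  constructor
  · intro hs
    obtain ⟨i, rfl⟩ : ∃ i, σ i = s := ⟨σ.symm s, σ.apply_symm_apply s⟩
    by_cases hil : i ≤ l
    · exact hσ hil
    · push_neg at hil
      have hlt : (l:ℕ) + 1 < m :=
        lt_of_le_of_lt (Nat.succ_le_of_lt (Fin.lt_def.mp hil)) i.isLt
      have hle : q (σ ⟨(l:ℕ)+1, hlt⟩) ≤ q (σ i) := by
        apply hσ
        exact Fin.le_def.mpr (Nat.succ_le_of_lt (Fin.lt_def.mp hil))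
      exact absurd hs (not_le.mpr (lt_of_lt_of_le (h3 hlt) hle))
  · intro hs; exact le_trans hs h1
end

section
/- Under assumptions (A3) and (A4), for every t > 0 one has ETP_w(t) ≥ ETP(t), i.e., Σ_{i=1}^m π_i·F_i(φ(π_i)·ω·t) ≥ Σ_{i=1}^m π_i·F_i(t). -/
/-!
Write `c i = φ(π_i) ω` and normalise the weights to `a i = π_i / Σ π_j`. Since `φ(π)(1 - π)` and
`π / φ(π)` are the summands of the two sums on the right of (A4), that assumption says exactly
that the weighted average `S = Σ a i / c i` is at most `1`. Then monotonicity of `F_i` and (A3),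
applied with `x i = 1 / c i`, give `Σ a i F_i(t) ≤ Σ a i F_i(t / S) ≤ Σ a i F_i(c i t)`.
When `m ≤ 1` no such weights exist, but then every `c i` equals `1`.
-/

open scoped BigOperators

/-- `φ(x) = (x/(1-x))^{1/k}`. -/
noncomputable def phi (k x : ℝ) : ℝ := (x / (1 - x)) ^ (1 / k)

open Finset Set

section Weights

variable {ι : Type*} [Fintype ι]

lemma div_sum_mem_Ioo [Nontrivial ι] {p : ι → ℝ} (hp : ∀ i, 0 < p i) (i : ι) :
    p i / ∑ j, p j ∈ Ioo (0 : ℝ) 1 := by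
  have hP : 0 < ∑ j, p j := sum_pos (fun j _ => hp j) univ_nonempty
  refine ⟨div_pos (hp i) hP, (div_lt_one hP).2 ?_⟩
  obtain ⟨j, hj⟩ := exists_ne i
  exact single_lt_sum hj (mem_univ i) (mem_univ j) (hp j) fun l _ _ => (hp l).le

lemma sum_mul_apply_le_sum_mul_apply_div_of_jensen [Nonempty ι] {F : ι → ℝ → ℝ}
    (hF : ∀ i, MonotoneOn (F i) (Ici 0)) {a x : ι → ℝ} (ha : ∀ i, 0 < a i) (hx : ∀ i, 0 < x i)
    (hax : ∑ i, a i * x i ≤ 1) {t : ℝ} (ht : 0 < t)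
    (hJensen : ∑ i, a i * F i (t / x i) ≥ ∑ i, a i * F i (t / ∑ j, a j * x j)) :
    ∑ i, a i * F i t ≤ ∑ i, a i * F i (t / x i) := by
  set S := ∑ j, a j * x j
  have hS_pos : 0 < S := sum_pos (fun i _ => mul_pos (ha i) (hx i)) univ_nonempty
  have ht_le : t ≤ t / S := (le_div_iff₀ hS_pos).2 (mul_le_of_le_one_right ht.le hax)
  calc ∑ i, a i * F i t
      ≤ ∑ i, a i * F i (t / S) := sum_le_sum fun i _ => mul_le_mul_of_nonneg_left
        (hF i ht.le (div_pos ht hS_pos).le ht_le) (ha i).le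
    _ ≤ ∑ i, a i * F i (t / x i) := hJensen

lemma sum_mul_apply_le_sum_mul_apply_mul [Nontrivial ι] {F : ι → ℝ → ℝ}
    (hF : ∀ i, MonotoneOn (F i) (Ici 0)) {p c : ι → ℝ} (hp : ∀ i, 0 < p i)
    (hc : ∀ i, 0 < c i) (hpc : ∑ i, p i / c i ≤ ∑ i, p i) {t : ℝ} (ht : 0 < t)
    (hJensen : ∀ a : ι → ℝ, (∀ i, a i ∈ Ioo (0 : ℝ) 1) → ∑ i, a i = 1 →
      ∀ x : ι → ℝ, (∀ i, 0 < x i) → ∑ i, a i * F i (t / x i) ≥ ∑ i, a i * F i (t / ∑ j, a j * x j)) :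
    ∑ i, p i * F i t ≤ ∑ i, p i * F i (c i * t) := by
  set P := ∑ j, p j
  have hP : 0 < P := sum_pos (fun j _ => hp j) univ_nonempty
  have ha_sum : ∑ i, p i / P = 1 := by rw [← sum_div, div_self hP.ne']
  have hax : ∑ i, p i / P * (1 / c i) ≤ 1 := by
    simp only [mul_one_div, div_right_comm _ P, ← sum_div]
    exact (div_le_one hP).2 hpc
  have hx : ∀ i, 0 < 1 / c i := fun i => one_div_pos.2 (hc i)
  have key := sum_mul_apply_le_sum_mul_apply_div_of_jensen hF (fun i => (div_sum_mem_Ioo hp i).1)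
    hx hax ht (hJensen _ (div_sum_mem_Ioo hp) ha_sum _ hx)
  simp only [one_div, div_inv_eq_mul, mul_comm t] at key
  have h_scale (f : ι → ℝ) : ∑ i, p i * f i = P * ∑ i, p i / P * f i := by
    rw [mul_sum]
    exact sum_congr rfl fun i _ => by field_simp
  rw [h_scale, h_scale]
  exact mul_le_mul_of_nonneg_left key hP.le

lemma mul_sum_div_sum_mul_eq_one [Subsingleton ι] {c v : ι → ℝ} (i : ι) (hc : c i ≠ 0)
    (hv : v i ≠ 0) : c i * ((∑ j, v j) / ∑ j, c j * v j) = 1 := by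
  rw [Fintype.sum_subsingleton _ i, Fintype.sum_subsingleton _ i]
  field_simp

end Weights

section Phi

variable {k x : ℝ}

lemma phi_pos (hx : 0 < x) (hx1 : x < 1) : 0 < phi k x :=
  Real.rpow_pos_of_pos (div_pos hx (by linarith)) _

lemma phi_eq_rpow_div_rpow (hx : 0 < x) (hx1 : x < 1) :
    phi k x = x ^ (1 / k) / (1 - x) ^ (1 / k) :=
  Real.div_rpow hx.le (by linarith) _

lemma phi_mul_one_sub (hx : 0 < x) (hx1 : x < 1) :
    phi k x * (1 - x) = (1 - x) ^ (1 - 1 / k) * x ^ (1 / k) := by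
  have h1 : 0 < 1 - x := by linarith
  have : 0 < (1 - x) ^ (1 / k) := Real.rpow_pos_of_pos h1 _
  rw [phi_eq_rpow_div_rpow hx hx1, Real.rpow_sub h1, Real.rpow_one]
  field_simp

lemma div_phi (hx : 0 < x) (hx1 : x < 1) :
    x / phi k x = (1 - x) ^ (1 / k) * x ^ (1 - 1 / k) := by
  have : 0 < x ^ (1 / k) := Real.rpow_pos_of_pos hx _
  have : 0 < (1 - x) ^ (1 / k) := Real.rpow_pos_of_pos (by linarith) _
  rw [phi_eq_rpow_div_rpow hx hx1, Real.rpow_sub hx, Real.rpow_one]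
  field_simp

end Phi

section Omega

variable {ι : Type*} [Fintype ι] [Nonempty ι] {k : ℝ} {pr : ι → ℝ}

lemma sum_one_sub_pos (hpr : ∀ i, pr i < 1) : 0 < ∑ i, (1 - pr i) :=
  sum_pos (fun i _ => sub_pos.2 (hpr i)) univ_nonempty

lemma sum_phi_mul_one_sub_pos (hpr : ∀ i, pr i ∈ Ioo (0 : ℝ) 1) :
    0 < ∑ i, phi k (pr i) * (1 - pr i) :=
  sum_pos (fun i _ => mul_pos (phi_pos (hpr i).1 (hpr i).2) (sub_pos.2 (hpr i).2)) univ_nonempty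

lemma sum_div_phi_mul_le_sum (hpr : ∀ i, pr i ∈ Ioo (0 : ℝ) 1) {ω : ℝ}
    (hω : ω = (∑ i, (1 - pr i)) / (∑ i, phi k (pr i) * (1 - pr i)))
    (hA4 : (∑ i, (1 - pr i)) * (∑ i, pr i) ≥
      (∑ i, (1 - pr i) ^ (1 - 1 / k) * pr i ^ (1 / k)) *
      (∑ i, (1 - pr i) ^ (1 / k) * pr i ^ (1 - 1 / k))) :
    ∑ i, pr i / (phi k (pr i) * ω) ≤ ∑ i, pr i := by
  have hD := sum_phi_mul_one_sub_pos (k := k) hpr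
  have hω_pos : 0 < ω := hω ▸ div_pos (sum_one_sub_pos fun i => (hpr i).2) hD
  rw [← sum_congr rfl fun i _ => phi_mul_one_sub (hpr i).1 (hpr i).2,
    ← sum_congr rfl fun i _ => div_phi (hpr i).1 (hpr i).2] at hA4
  simp only [← div_div, ← sum_div]
  rw [div_le_iff₀ hω_pos, hω, ← mul_div_assoc, le_div_iff₀ hD]
  linarith

end Omega

theorem straw_ETP_dominates_general (m : ℕ) (k : ℝ)
    (pr : Fin m → ℝ) (hpr : ∀ i, pr i ∈ Set.Ioo (0 : ℝ) 1)
    (F : Fin m → ℝ → ℝ)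
    (hFmono : ∀ i, MonotoneOn (F i) (Set.Ici 0))
    (ω : ℝ)
    (hω : ω = (∑ i, (1 - pr i)) / (∑ i, phi k (pr i) * (1 - pr i)))
    -- Assumption (A3)
    (hA3 : ∀ t' > (0 : ℝ), ∀ a : Fin m → ℝ, (∀ i, a i ∈ Set.Ioo (0 : ℝ) 1) →
      (∑ i, a i) = 1 → ∀ x : Fin m → ℝ, (∀ i, 0 < x i) →
        ∑ i, a i * F i (t' / x i) ≥ ∑ i, a i * F i (t' / ∑ j, a j * x j))
    -- Assumption (A4)
    (hA4 : (∑ i, (1 - pr i)) * (∑ i, pr i) ≥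
      (∑ i, (1 - pr i) ^ (1 - 1 / k) * pr i ^ (1 / k)) *
      (∑ i, (1 - pr i) ^ (1 / k) * pr i ^ (1 - 1 / k))) :
    ∀ t > (0 : ℝ), ∑ i, pr i * F i (phi k (pr i) * ω * t) ≥ ∑ i, pr i * F i t := by
  intro t ht
  have hphi_pos i : 0 < phi k (pr i) := phi_pos (hpr i).1 (hpr i).2
  rcases subsingleton_or_nontrivial (Fin m) with _ | _
  · refine ge_of_eq (sum_congr rfl fun i _ => ?_)
    rw [hω, mul_sum_div_sum_mul_eq_one (c := fun j => phi k (pr j))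
      (v := fun j => 1 - pr j) i (hphi_pos i).ne' (sub_pos.2 (hpr i).2).ne', one_mul]
  · have hω_pos : 0 < ω :=
      hω ▸ div_pos (sum_one_sub_pos fun i => (hpr i).2) (sum_phi_mul_one_sub_pos hpr)
    exact sum_mul_apply_le_sum_mul_apply_mul hFmono (fun i => (hpr i).1)
      (fun i => mul_pos (hphi_pos i) hω_pos) (sum_div_phi_mul_le_sum hpr hω hA4) ht (hA3 t ht)

/-- Inequality (A.16) in the proof of Theorem 2: under Assumptions (A3) and (A4),
the expected number of true positives of the weighted rule dominates that of the
unweighted rule at every threshold `t > 0`. -/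
theorem straw_ETP_dominates (m : ℕ) (hm : 1 ≤ m) (k : ℝ) (hk : 0 < k)
    (pr : Fin m → ℝ) (hpr : ∀ i, pr i ∈ Set.Ioo (0 : ℝ) 1)
    (F : Fin m → ℝ → ℝ)
    (hFmono : ∀ i, MonotoneOn (F i) (Set.Ici 0))
    (hFrange : ∀ i, ∀ t, 0 ≤ t → F i t ∈ Set.Icc (0 : ℝ) 1)
    (hF0 : ∀ i, F i 0 = 0)
    (ω : ℝ)
    (hω : ω = (∑ i, (1 - pr i)) / (∑ i, phi k (pr i) * (1 - pr i)))
    -- Assumption (A3)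
    (hA3 : ∀ t' > (0 : ℝ), ∀ a : Fin m → ℝ, (∀ i, a i ∈ Set.Ioo (0 : ℝ) 1) →
      (∑ i, a i) = 1 → ∀ x : Fin m → ℝ, (∀ i, 0 < x i) →
        ∑ i, a i * F i (t' / x i) ≥ ∑ i, a i * F i (t' / ∑ j, a j * x j))
    -- Assumption (A4)
    (hA4 : (∑ i, (1 - pr i)) * (∑ i, pr i) ≥
      (∑ i, (1 - pr i) ^ (1 - 1 / k) * pr i ^ (1 / k)) *
      (∑ i, (1 - pr i) ^ (1 / k) * pr i ^ (1 - 1 / k))) :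
    ∀ t > (0 : ℝ), ∑ i, pr i * F i (phi k (pr i) * ω * t) ≥ ∑ i, pr i * F i t :=
  straw_ETP_dominates_general m k pr hpr F hFmono ω hω hA3 hA4
end

section
/- Under assumptions (A3) and (A4), for every t > 0 with ETP(t) > 0 one has mFDR_w(t) ≤ mFDR(t), i.e., (A·t)/(A·t + ETP_w(t)) ≤ (A·t)/(A·t + ETP(t)), where A = Σ_{i=1}^m (1−π_i). -/
open scoped BigOperators

/-- Under Assumptions (A3) and (A4), the marginal FDR of the weighted rule is no
larger than that of the unweighted rule at every threshold `t > 0` with `ETP(t) > 0`: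
`A·t/(A·t + ETP_w(t)) ≤ A·t/(A·t + ETP(t))` with `A = Σ_i (1 - π_i)`. -/
theorem straw_mFDR_dominated (m : ℕ) (hm : 1 ≤ m) (k : ℝ) (hk : 0 < k)
    (pr : Fin m → ℝ) (hpr : ∀ i, pr i ∈ Set.Ioo (0 : ℝ) 1)
    (F : Fin m → ℝ → ℝ)
    (hFmono : ∀ i, MonotoneOn (F i) (Set.Ici 0))
    (hFrange : ∀ i, ∀ t, 0 ≤ t → F i t ∈ Set.Icc (0 : ℝ) 1)
    (hF0 : ∀ i, F i 0 = 0)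
    (ω : ℝ)
    (hω : ω = (∑ i, (1 - pr i)) / (∑ i, phi k (pr i) * (1 - pr i)))
    -- Assumption (A3)
    (hA3 : ∀ t' > (0 : ℝ), ∀ a : Fin m → ℝ, (∀ i, a i ∈ Set.Ioo (0 : ℝ) 1) →
      (∑ i, a i) = 1 → ∀ x : Fin m → ℝ, (∀ i, 0 < x i) →
        ∑ i, a i * F i (t' / x i) ≥ ∑ i, a i * F i (t' / ∑ j, a j * x j))
    -- Assumption (A4)
    (hA4 : (∑ i, (1 - pr i)) * (∑ i, pr i) ≥
      (∑ i, (1 - pr i) ^ (1 - 1 / k) * pr i ^ (1 / k)) *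
      (∑ i, (1 - pr i) ^ (1 / k) * pr i ^ (1 - 1 / k)))
    (A : ℝ) (hA : A = ∑ i, (1 - pr i)) :
    ∀ t > (0 : ℝ), 0 < ∑ i, pr i * F i t →
      A * t / (A * t + ∑ i, pr i * F i (phi k (pr i) * ω * t)) ≤
        A * t / (A * t + ∑ i, pr i * F i t) := by

  intro t ht hETP
  have hne : (Finset.univ : Finset (Fin m)).Nonempty := ⟨⟨0, by omega⟩, Finset.mem_univ _⟩
  have hphi_pos : ∀ i, 0 < phi k (pr i) := fun i =>
    Real.rpow_pos_of_pos (div_pos (hpr i).1 (by linarith [(hpr i).2])) _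
  have hNpos : 0 < ∑ i, (1 - pr i) :=
    Finset.sum_pos (fun i _ => by linarith [(hpr i).2]) hne
  have hDpos : 0 < ∑ i, phi k (pr i) * (1 - pr i) :=
    Finset.sum_pos (fun i _ => mul_pos (hphi_pos i) (by linarith [(hpr i).2])) hne
  have hωpos : 0 < ω := hω ▸ div_pos hNpos hDpos
  have key : ∑ i, pr i * F i t ≤ ∑ i, pr i * F i (phi k (pr i) * ω * t) := by
    rcases eq_or_lt_of_le hm with hm1 | hm2
    · -- m = 1 : weights are trivial, φ·ω = 1
      subst hm1
      have hq : (0:ℝ) < 1 - pr 0 := by linarith [(hpr 0).2]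
      have hφ := hphi_pos 0
      have hω1 : phi k (pr 0) * ω * t = t := by
        rw [hω]
        simp only [Fin.sum_univ_one]
        field_simp
      simp only [Fin.sum_univ_one, hω1]
      exact le_rfl

    · -- m ≥ 2
      set S := ∑ i, pr i with hS
      have hSpos : 0 < S := Finset.sum_pos (fun i _ => (hpr i).1) hne
      have ha_mem : ∀ i, (fun i => pr i / S) i ∈ Set.Ioo (0:ℝ) 1 := by
        intro i
        refine ⟨div_pos (hpr i).1 hSpos, ?_⟩
        rw [div_lt_one hSpos]
        obtain ⟨j, hj⟩ := Fintype.exists_ne_of_one_lt_card (by simpa using hm2) i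
        exact Finset.single_lt_sum hj (Finset.mem_univ i) (Finset.mem_univ j)
          (hpr j).1 (fun kk _ _ => (hpr kk).1.le)
      have hsum_a : ∑ i, pr i / S = 1 := by
        rw [← Finset.sum_div]; exact div_self (ne_of_gt hSpos)
      have hx_pos : ∀ i, 0 < (fun i => 1 / (phi k (pr i) * ω)) i := fun i =>
        one_div_pos.mpr (mul_pos (hphi_pos i) hωpos)
      have hA3' := hA3 t ht _ ha_mem hsum_a _ hx_pos
      set X := ∑ j, (pr j / S) * (1 / (phi k (pr j) * ω)) with hX
      have hXpos : 0 < X :=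
        Finset.sum_pos (fun i _ => mul_pos (ha_mem i).1 (hx_pos i)) hne
      -- identify products of powers
      have hid1 : ∀ i, pr i / phi k (pr i) = (1 - pr i) ^ (1/k) * pr i ^ (1 - 1/k) := by
        intro i
        have hp := (hpr i).1
        have hq : (0:ℝ) < 1 - pr i := by linarith [(hpr i).2]
        have hpk : (0:ℝ) < pr i ^ (1/k) := Real.rpow_pos_of_pos hp _
        have hqk : (0:ℝ) < (1 - pr i) ^ (1/k) := Real.rpow_pos_of_pos hq _
        rw [phi, Real.div_rpow hp.le hq.le, Real.rpow_sub hp, Real.rpow_one]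
        field_simp
      have hid2 : ∀ i, phi k (pr i) * (1 - pr i) = (1 - pr i) ^ (1 - 1/k) * pr i ^ (1/k) := by
        intro i
        have hp := (hpr i).1
        have hq : (0:ℝ) < 1 - pr i := by linarith [(hpr i).2]
        have hqk : (0:ℝ) < (1 - pr i) ^ (1/k) := Real.rpow_pos_of_pos hq _
        rw [phi, Real.div_rpow hp.le hq.le, Real.rpow_sub hq, Real.rpow_one]
        field_simp
      have hXle : X ≤ 1 := by
        have hT : ∀ j, (pr j / S) * (1 / (phi k (pr j) * ω)) =
            (pr j / phi k (pr j)) / (S * ω) := by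
          intro j
          have := hphi_pos j
          simp only [one_div, div_eq_mul_inv, mul_inv]
          ring
        have hXeq : X = (∑ j, pr j / phi k (pr j)) / (S * ω) := by
          rw [hX, Finset.sum_congr rfl (fun j _ => hT j), ← Finset.sum_div]
        rw [hXeq, div_le_one (mul_pos hSpos hωpos), hω, ← mul_div_assoc,
          le_div_iff₀ hDpos]
        calc (∑ j, pr j / phi k (pr j)) * (∑ i, phi k (pr i) * (1 - pr i))
            = (∑ i, (1 - pr i) ^ (1 - 1/k) * pr i ^ (1/k)) *
              (∑ i, (1 - pr i) ^ (1/k) * pr i ^ (1 - 1/k)) := by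
              rw [Finset.sum_congr rfl (fun j _ => hid1 j),
                Finset.sum_congr rfl (fun j _ => hid2 j)]
              ring
          _ ≤ (∑ i, (1 - pr i)) * S := hA4
          _ = S * (∑ i, (1 - pr i)) := by ring
      have htX : t ≤ t / X := by
        rw [le_div_iff₀ hXpos]
        nlinarith
      have h1 : ∑ i, pr i * F i t ≤ ∑ i, pr i * F i (t / X) := by
        refine Finset.sum_le_sum (fun i _ => ?_)
        exact mul_le_mul_of_nonneg_left
          (hFmono i (Set.mem_Ici.mpr ht.le)
            (Set.mem_Ici.mpr (le_trans ht.le htX)) htX) (hpr i).1.le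
      have h2 : ∑ i, (pr i / S) * F i (t / X) ≤
          ∑ i, (pr i / S) * F i (t / (1 / (phi k (pr i) * ω))) := hA3'
      have h3 : ∑ i, pr i * F i (t / X) ≤
          ∑ i, pr i * F i (t / (1 / (phi k (pr i) * ω))) := by
        have hmul := mul_le_mul_of_nonneg_left h2 hSpos.le
        rw [Finset.mul_sum, Finset.mul_sum] at hmul
        calc ∑ i, pr i * F i (t / X)
            = ∑ i, S * ((pr i / S) * F i (t / X)) := by
              refine Finset.sum_congr rfl (fun i _ => ?_)
              field_simp
          _ ≤ ∑ i, S * ((pr i / S) * F i (t / (1 / (phi k (pr i) * ω)))) := hmul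
          _ = ∑ i, pr i * F i (t / (1 / (phi k (pr i) * ω))) := by
              refine Finset.sum_congr rfl (fun i _ => ?_)
              field_simp
      have h4 : ∀ i, t / (1 / (phi k (pr i) * ω)) = phi k (pr i) * ω * t := by
        intro i
        rw [one_div, div_eq_mul_inv, inv_inv]
        ring
      calc ∑ i, pr i * F i t ≤ ∑ i, pr i * F i (t / X) := h1
        _ ≤ ∑ i, pr i * F i (t / (1 / (phi k (pr i) * ω))) := h3
        _ = ∑ i, pr i * F i (phi k (pr i) * ω * t) := by
            refine Finset.sum_congr rfl (fun i _ => ?_)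
            rw [h4 i]
  have hAtpos : 0 < A * t := mul_pos (hA ▸ hNpos) ht
  exact div_le_div_of_nonneg_left hAtpos.le (by linarith) (by linarith)
end

section
/- Suppose each F_i is continuous, the set {t > 0 : mFDR(t) ≤ α} is nonempty and bounded, and define the oracle threshold t¹_OR = sup{t > 0 : mFDR(t) ≤ α}. Then under assumptions (A3) and (A4): mFDR_w(t¹_OR) ≤ mFDR(t¹_OR) ≤ α. -/
open scoped BigOperators

/-- Expected number of true positives of the unweighted rule. -/
noncomputable def ETP (m : ℕ) (pr : Fin m → ℝ) (F : Fin m → ℝ → ℝ) (t : ℝ) : ℝ :=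
  ∑ i, pr i * F i t

/-- Expected number of true positives of the weighted rule. -/
noncomputable def ETPw (m : ℕ) (k : ℝ) (pr : Fin m → ℝ) (F : Fin m → ℝ → ℝ) (ω t : ℝ) : ℝ :=
  ∑ i, pr i * F i (phi k (pr i) * ω * t)

/-- Marginal FDR of the unweighted rule. -/
noncomputable def mFDR (m : ℕ) (pr : Fin m → ℝ) (F : Fin m → ℝ → ℝ) (t : ℝ) : ℝ :=
  (∑ i, (1 - pr i)) * t / ((∑ i, (1 - pr i)) * t + ETP m pr F t)

/-- Marginal FDR of the weighted rule. -/
noncomputable def mFDRw (m : ℕ) (k : ℝ) (pr : Fin m → ℝ) (F : Fin m → ℝ → ℝ) (ω t : ℝ) : ℝ :=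
  (∑ i, (1 - pr i)) * t / ((∑ i, (1 - pr i)) * t + ETPw m k pr F ω t)

/-- Part (1) of Theorem 2: at the unweighted oracle threshold
`t¹_OR = sup{t > 0 : mFDR(t) ≤ α}`, under (A3) and (A4),
`mFDR_w(t¹_OR) ≤ mFDR(t¹_OR) ≤ α`. -/
theorem straw_theorem2_part1 (m : ℕ) (hm : 1 ≤ m) (k : ℝ) (hk : 0 < k)
    (α : ℝ) (hα : α ∈ Set.Ioo (0 : ℝ) 1)
    (pr : Fin m → ℝ) (hpr : ∀ i, pr i ∈ Set.Ioo (0 : ℝ) 1)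
    (F : Fin m → ℝ → ℝ)
    (hFmono : ∀ i, MonotoneOn (F i) (Set.Ici 0))
    (hFrange : ∀ i, ∀ t, 0 ≤ t → F i t ∈ Set.Icc (0 : ℝ) 1)
    (hF0 : ∀ i, F i 0 = 0)
    (hFcont : ∀ i, ContinuousOn (F i) (Set.Ici 0))
    (ω : ℝ)
    (hω : ω = (∑ i, (1 - pr i)) / (∑ i, phi k (pr i) * (1 - pr i)))
    -- Assumption (A3)
    (hA3 : ∀ t' > (0 : ℝ), ∀ a : Fin m → ℝ, (∀ i, a i ∈ Set.Ioo (0 : ℝ) 1) →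
      (∑ i, a i) = 1 → ∀ x : Fin m → ℝ, (∀ i, 0 < x i) →
        ∑ i, a i * F i (t' / x i) ≥ ∑ i, a i * F i (t' / ∑ j, a j * x j))
    -- Assumption (A4)
    (hA4 : (∑ i, (1 - pr i)) * (∑ i, pr i) ≥
      (∑ i, (1 - pr i) ^ (1 - 1 / k) * pr i ^ (1 / k)) *
      (∑ i, (1 - pr i) ^ (1 / k) * pr i ^ (1 - 1 / k)))
    (hne : {t : ℝ | 0 < t ∧ mFDR m pr F t ≤ α}.Nonempty)
    (hbdd : BddAbove {t : ℝ | 0 < t ∧ mFDR m pr F t ≤ α})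
    (tOR : ℝ) (htOR : tOR = sSup {t : ℝ | 0 < t ∧ mFDR m pr F t ≤ α}) :
    mFDRw m k pr F ω tOR ≤ mFDR m pr F tOR ∧ mFDR m pr F tOR ≤ α := by
  have h1pr : ∀ i, 0 < 1 - pr i := fun i => by linarith [(hpr i).2]
  have hprpos : ∀ i, 0 < pr i := fun i => (hpr i).1
  have hApos : 0 < ∑ i, (1 - pr i) :=
    Finset.sum_pos (fun i _ => h1pr i) ⟨⟨0, hm⟩, Finset.mem_univ _⟩
  have hphi : ∀ i, 0 < phi k (pr i) := fun i =>
    Real.rpow_pos_of_pos (div_pos (hprpos i) (h1pr i)) _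
  have hDpos : 0 < ∑ i, phi k (pr i) * (1 - pr i) :=
    Finset.sum_pos (fun i _ => mul_pos (hphi i) (h1pr i)) ⟨⟨0, hm⟩, Finset.mem_univ _⟩
  have hωpos : 0 < ω := hω ▸ div_pos hApos hDpos
  have hSpos : 0 < ∑ i, pr i :=
    Finset.sum_pos (fun i _ => hprpos i) ⟨⟨0, hm⟩, Finset.mem_univ _⟩
  obtain ⟨t0, ht0⟩ := hne
  have htORpos : 0 < tOR := by
    have h := le_csSup hbdd ht0
    rw [← htOR] at h
    linarith [ht0.1]
  have hETPnonneg : 0 ≤ ETP m pr F tOR :=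
    Finset.sum_nonneg fun i _ => mul_nonneg (hprpos i).le (hFrange i tOR htORpos.le).1
  -- consequence of (A4)
  have hA4' : ∑ i, pr i / phi k (pr i) ≤ (∑ i, pr i) * ω := by
    have e1 : (∑ i, phi k (pr i) * (1 - pr i))
        = ∑ i, (1 - pr i) ^ (1 - 1/k) * pr i ^ (1/k) := by
      refine Finset.sum_congr rfl fun i _ => ?_
      have h1 := hprpos i; have h2 := h1pr i
      rw [phi, Real.div_rpow h1.le h2.le, Real.rpow_sub h2, Real.rpow_one]
      have hne2 : (1 - pr i) ^ (1/k) ≠ 0 := (Real.rpow_pos_of_pos h2 _).ne'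
      field_simp
    have e2 : (∑ i, pr i / phi k (pr i))
        = ∑ i, (1 - pr i) ^ (1/k) * pr i ^ (1 - 1/k) := by
      refine Finset.sum_congr rfl fun i _ => ?_
      have h1 := hprpos i; have h2 := h1pr i
      rw [phi, Real.div_rpow h1.le h2.le, Real.rpow_sub h1, Real.rpow_one]
      have hne1 : (pr i) ^ (1/k) ≠ 0 := (Real.rpow_pos_of_pos h1 _).ne'
      have hne2 : (1 - pr i) ^ (1/k) ≠ 0 := (Real.rpow_pos_of_pos h2 _).ne'
      field_simp
    rw [hω]
    rw [show (∑ i, pr i) * ((∑ i, (1 - pr i)) / (∑ i, phi k (pr i) * (1 - pr i)))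
        = (∑ i, pr i) * (∑ i, (1 - pr i)) / (∑ i, phi k (pr i) * (1 - pr i)) from by ring]
    rw [le_div_iff₀ hDpos, e2, e1]
    nlinarith [hA4]
  -- the key comparison of ETP and ETPw at tOR
  have key : ETP m pr F tOR ≤ ETPw m k pr F ω tOR := by
    rcases eq_or_lt_of_le hm with hm1 | hm2
    · -- m = 1
      subst hm1
      have harg : phi k (pr 0) * ω = 1 := by
        rw [hω, Fin.sum_univ_one, Fin.sum_univ_one]
        field_simp
        exact div_self (mul_pos (hphi 0) (h1pr 0)).ne'
      rw [ETP, ETPw, Fin.sum_univ_one, Fin.sum_univ_one, harg, one_mul]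
    · -- 2 ≤ m
      have hnt : Nontrivial (Fin m) := Fin.nontrivial_iff_two_le.mpr hm2
      set T := ∑ i, pr i with hT
      set a : Fin m → ℝ := fun i => pr i / T with ha
      set x : Fin m → ℝ := fun i => 1 / (phi k (pr i) * ω) with hx
      have haIoo : ∀ i, a i ∈ Set.Ioo (0:ℝ) 1 := by
        intro i
        refine ⟨div_pos (hprpos i) hSpos, ?_⟩
        rw [ha]
        simp only []
        rw [div_lt_one hSpos]
        obtain ⟨j, hj⟩ := exists_ne i
        calc pr i = ∑ x ∈ ({i} : Finset (Fin m)), pr x := (Finset.sum_singleton _ _).symm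
          _ < ∑ x, pr x := Finset.sum_lt_sum_of_subset (Finset.subset_univ _)
              (Finset.mem_univ j) (by simpa using hj) (hprpos j)
              (fun t _ _ => (hprpos t).le)
      have hasum : ∑ i, a i = 1 := by
        rw [ha]
        simp only []
        rw [← Finset.sum_div, div_self hSpos.ne']
      have hxpos : ∀ i, 0 < x i := fun i =>
        one_div_pos.mpr (mul_pos (hphi i) hωpos)
      have h3 := hA3 tOR htORpos a haIoo hasum x hxpos
      set s := ∑ j, a j * x j with hs
      have hspos : 0 < s :=
        Finset.sum_pos (fun j _ => mul_pos (haIoo j).1 (hxpos j)) ⟨⟨0, hm⟩, Finset.mem_univ _⟩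
      have hs1 : s ≤ 1 := by
        have hcalc : s = (∑ j, pr j / phi k (pr j)) / (T * ω) := by
          rw [hs, Finset.sum_div]
          refine Finset.sum_congr rfl fun j _ => ?_
          rw [ha, hx]
          simp only []
          field_simp
        rw [hcalc, div_le_one (mul_pos hSpos hωpos)]
        exact hA4'
      have hts : tOR ≤ tOR / s := by
        rw [le_div_iff₀ hspos]
        nlinarith
      have hstep1 : ETP m pr F tOR ≤ ∑ i, pr i * F i (tOR / s) := by
        refine Finset.sum_le_sum fun i _ => ?_
        exact mul_le_mul_of_nonneg_left
          (hFmono i htORpos.le (div_pos htORpos hspos).le hts) (hprpos i).le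
      have hrepr : ∀ u : Fin m → ℝ, ∑ i, pr i * u i = T * ∑ i, a i * u i := by
        intro u
        rw [Finset.mul_sum]
        refine Finset.sum_congr rfl fun i _ => ?_
        rw [ha]
        simp only []
        field_simp
      have hstep2 : ∑ i, pr i * F i (tOR / s) ≤ ∑ i, pr i * F i (tOR / x i) := by
        rw [hrepr (fun i => F i (tOR / s)), hrepr (fun i => F i (tOR / x i))]
        exact mul_le_mul_of_nonneg_left h3 hSpos.le
      have hstep3 : ∑ i, pr i * F i (tOR / x i) = ETPw m k pr F ω tOR := by
        refine Finset.sum_congr rfl fun i _ => ?_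
        congr 1
        congr 1
        rw [hx]
        simp only []
        rw [one_div, div_eq_mul_inv, inv_inv]
        ring
      rw [ETP, ETPw] at *
      linarith [hstep1, hstep2, hstep3.le, hstep3.ge]
  -- continuity of mFDR at tOR
  have hETPc : ContinuousAt (ETP m pr F) tOR := by
    have hFc : ∀ i : Fin m, ContinuousAt (F i) tOR := fun i =>
      (hFcont i).continuousAt (Ici_mem_nhds htORpos)
    exact tendsto_finset_sum _ (fun i _ => tendsto_const_nhds.mul (hFc i))
  have hdenpos : 0 < (∑ i, (1 - pr i)) * tOR + ETP m pr F tOR :=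
    add_pos_of_pos_of_nonneg (mul_pos hApos htORpos) hETPnonneg
  have hgc : ContinuousAt (mFDR m pr F) tOR := by
    have : ContinuousAt (fun t => (∑ i, (1 - pr i)) * t
        / ((∑ i, (1 - pr i)) * t + ETP m pr F t)) tOR :=
      ContinuousAt.div ((continuous_const.mul continuous_id).continuousAt)
        (((continuous_const.mul continuous_id).continuousAt).add hETPc) hdenpos.ne'
    exact this
  have hmain2 : mFDR m pr F tOR ≤ α := by
    have hclos : tOR ∈ closure {t : ℝ | 0 < t ∧ mFDR m pr F t ≤ α} := by
      rw [htOR]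
      exact csSup_mem_closure ⟨t0, ht0⟩ hbdd
    have hnb : (nhdsWithin tOR {t : ℝ | 0 < t ∧ mFDR m pr F t ≤ α}).NeBot :=
      mem_closure_iff_nhdsWithin_neBot.mp hclos
    haveI := hnb
    refine le_of_tendsto
      (hgc.continuousWithinAt : ContinuousWithinAt (mFDR m pr F) {t : ℝ | 0 < t ∧ mFDR m pr F t ≤ α} tOR) ?_
    filter_upwards [self_mem_nhdsWithin] with t ht
    exact ht.2
  refine ⟨?_, hmain2⟩
  rw [mFDRw, mFDR]
  gcongr
end

section
/- Suppose each F_i is continuous, the sets {t > 0 : mFDR(t) ≤ α} and {t > 0 : mFDR_w(t) ≤ α} are nonempty and bounded, and define t¹_OR = sup{t > 0 : mFDR(t) ≤ α} and t^k_OR = sup{t > 0 : mFDR_w(t) ≤ α}. Then under assumptions (A3) and (A4): ETP_w(t^k_OR) ≥ ETP_w(t¹_OR) ≥ ETP(t¹_OR). -/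
open scoped BigOperators

/-- Part (2) of Theorem 2: with oracle thresholds
`t¹_OR = sup{t > 0 : mFDR(t) ≤ α}` and `t^k_OR = sup{t > 0 : mFDR_w(t) ≤ α}`,
under (A3) and (A4), `ETP_w(t^k_OR) ≥ ETP_w(t¹_OR) ≥ ETP(t¹_OR)`. -/
theorem straw_theorem2_part2 (m : ℕ) (hm : 1 ≤ m) (k : ℝ) (hk : 0 < k)
    (α : ℝ) (hα : α ∈ Set.Ioo (0 : ℝ) 1)
    (pr : Fin m → ℝ) (hpr : ∀ i, pr i ∈ Set.Ioo (0 : ℝ) 1)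
    (F : Fin m → ℝ → ℝ)
    (hFmono : ∀ i, MonotoneOn (F i) (Set.Ici 0))
    (hFrange : ∀ i, ∀ t, 0 ≤ t → F i t ∈ Set.Icc (0 : ℝ) 1)
    (hF0 : ∀ i, F i 0 = 0)
    (hFcont : ∀ i, ContinuousOn (F i) (Set.Ici 0))
    (ω : ℝ)
    (hω : ω = (∑ i, (1 - pr i)) / (∑ i, phi k (pr i) * (1 - pr i)))
    -- Assumption (A3)
    (hA3 : ∀ t' > (0 : ℝ), ∀ a : Fin m → ℝ, (∀ i, a i ∈ Set.Ioo (0 : ℝ) 1) →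
      (∑ i, a i) = 1 → ∀ x : Fin m → ℝ, (∀ i, 0 < x i) →
        ∑ i, a i * F i (t' / x i) ≥ ∑ i, a i * F i (t' / ∑ j, a j * x j))
    -- Assumption (A4)
    (hA4 : (∑ i, (1 - pr i)) * (∑ i, pr i) ≥
      (∑ i, (1 - pr i) ^ (1 - 1 / k) * pr i ^ (1 / k)) *
      (∑ i, (1 - pr i) ^ (1 / k) * pr i ^ (1 - 1 / k)))
    (hne1 : {t : ℝ | 0 < t ∧ mFDR m pr F t ≤ α}.Nonempty)
    (hbdd1 : BddAbove {t : ℝ | 0 < t ∧ mFDR m pr F t ≤ α})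
    (hnek : {t : ℝ | 0 < t ∧ mFDRw m k pr F ω t ≤ α}.Nonempty)
    (hbddk : BddAbove {t : ℝ | 0 < t ∧ mFDRw m k pr F ω t ≤ α})
    (tOR1 : ℝ) (htOR1 : tOR1 = sSup {t : ℝ | 0 < t ∧ mFDR m pr F t ≤ α})
    (tORk : ℝ) (htORk : tORk = sSup {t : ℝ | 0 < t ∧ mFDRw m k pr F ω t ≤ α}) :
    ETPw m k pr F ω tORk ≥ ETPw m k pr F ω tOR1 ∧
    ETPw m k pr F ω tOR1 ≥ ETP m pr F tOR1 := by

  have hmpos : 0 < m := hm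
  haveI : Nonempty (Fin m) := Fin.pos_iff_nonempty.mp hmpos
  have h1pi : ∀ i, (0:ℝ) < 1 - pr i := fun i => by linarith [(hpr i).2]
  have hApos : 0 < ∑ i, (1 - pr i) :=
    Finset.sum_pos (fun i _ => h1pi i) Finset.univ_nonempty
  have hphi_pos : ∀ i, 0 < phi k (pr i) := fun i =>
    Real.rpow_pos_of_pos (div_pos (hpr i).1 (h1pi i)) _
  have hPpos : 0 < ∑ i, pr i :=
    Finset.sum_pos (fun i _ => (hpr i).1) Finset.univ_nonempty
  have hBpos : 0 < ∑ i, phi k (pr i) * (1 - pr i) :=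
    Finset.sum_pos (fun i _ => mul_pos (hphi_pos i) (h1pi i)) Finset.univ_nonempty
  have hωpos : 0 < ω := hω ▸ div_pos hApos hBpos
  -- A4 rewritten
  have hBeq : (∑ i, phi k (pr i) * (1 - pr i))
      = ∑ i, (1 - pr i) ^ (1 - 1 / k) * pr i ^ (1 / k) := by
    refine Finset.sum_congr rfl fun i _ => ?_
    have hπ := (hpr i).1
    have h1π := h1pi i
    have hne : (1 - pr i) ^ (1 / k) ≠ 0 := (Real.rpow_pos_of_pos h1π _).ne'
    rw [phi, Real.div_rpow hπ.le h1π.le, Real.rpow_sub h1π, Real.rpow_one]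
    field_simp
  have hCeq : (∑ i, pr i / phi k (pr i))
      = ∑ i, (1 - pr i) ^ (1 / k) * pr i ^ (1 - 1 / k) := by
    refine Finset.sum_congr rfl fun i _ => ?_
    have hπ := (hpr i).1
    have h1π := h1pi i
    have hne : (pr i) ^ (1 / k) ≠ 0 := (Real.rpow_pos_of_pos hπ _).ne'
    rw [phi, Real.div_rpow hπ.le h1π.le, Real.rpow_sub hπ, Real.rpow_one]
    field_simp
  have hBC : (∑ i, phi k (pr i) * (1 - pr i)) * (∑ i, pr i / phi k (pr i))
      ≤ (∑ i, (1 - pr i)) * (∑ i, pr i) := by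
    rw [hBeq, hCeq]; exact hA4
  -- Key inequality: ETP t ≤ ETPw t for t > 0
  have hkey : ∀ t : ℝ, 0 < t → ETP m pr F t ≤ ETPw m k pr F ω t := by
    intro t ht
    by_cases hm1 : m = 1
    · subst hm1
      have hφ := hphi_pos 0
      have hωe : phi k (pr 0) * ω = 1 := by
        have h1 := (hphi_pos 0).ne'
        have h2 := (h1pi 0).ne'
        rw [hω, Fin.sum_univ_one, Fin.sum_univ_one]
        field_simp
      unfold ETP ETPw
      rw [Fin.sum_univ_one, Fin.sum_univ_one, hωe, one_mul]
    · have hm2 : 2 ≤ m := by omega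
      have ha : ∀ i, (pr i / ∑ j, pr j) ∈ Set.Ioo (0:ℝ) 1 := by
        intro i
        constructor
        · exact div_pos (hpr i).1 hPpos
        · rw [div_lt_one hPpos]
          have hneer : (Finset.univ.erase i).Nonempty := by
            apply Finset.card_pos.mp
            rw [Finset.card_erase_of_mem (Finset.mem_univ i), Finset.card_univ,
              Fintype.card_fin]
            omega
          have hrest : 0 < ∑ j ∈ Finset.univ.erase i, pr j :=
            Finset.sum_pos (fun j _ => (hpr j).1) hneer
          have hsplit := Finset.add_sum_erase Finset.univ pr (Finset.mem_univ i)
          linarith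
      have hsuma : (∑ i, pr i / ∑ j, pr j) = 1 := by
        rw [← Finset.sum_div]; exact div_self hPpos.ne'
      have hx : ∀ i, (0:ℝ) < 1 / (phi k (pr i) * ω) :=
        fun i => one_div_pos.mpr (mul_pos (hphi_pos i) hωpos)
      have key := hA3 t ht (fun i => pr i / ∑ j, pr j) ha hsuma
        (fun i => 1 / (phi k (pr i) * ω)) hx
      simp only [one_div, div_inv_eq_mul] at key
      set S := ∑ j, (pr j / ∑ j', pr j') * (phi k (pr j) * ω)⁻¹ with hS_def
      have hSpos : 0 < S := Finset.sum_pos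
        (fun j _ => mul_pos (ha j).1 (inv_pos.mpr (mul_pos (hphi_pos j) hωpos)))
        Finset.univ_nonempty
      have hS1 : S ≤ 1 := by
        have hSPA : S * ((∑ i, pr i) * (∑ i, (1 - pr i)))
            = (∑ i, phi k (pr i) * (1 - pr i)) * (∑ i, pr i / phi k (pr i)) := by
          have e1 : S * ((∑ i, pr i) * (∑ i, (1 - pr i)))
              = ∑ i, (∑ i', phi k (pr i') * (1 - pr i')) * (pr i / phi k (pr i)) := by
            rw [hS_def, Finset.sum_mul]
            refine Finset.sum_congr rfl fun i _ => ?_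
            have hφ := (hphi_pos i).ne'
            rw [hω]
            set AA := ∑ i', (1 - pr i') with hAA
            set PP := ∑ i', pr i' with hPP
            set BB := ∑ i', phi k (pr i') * (1 - pr i') with hBB
            field_simp
          rw [e1, ← Finset.mul_sum]
        have h2 : S * ((∑ i, pr i) * (∑ i, (1 - pr i)))
            ≤ 1 * ((∑ i, pr i) * (∑ i, (1 - pr i))) := by
          rw [one_mul, hSPA]
          calc (∑ i, phi k (pr i) * (1 - pr i)) * (∑ i, pr i / phi k (pr i))
              ≤ (∑ i, (1 - pr i)) * (∑ i, pr i) := hBC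
            _ = (∑ i, pr i) * (∑ i, (1 - pr i)) := mul_comm _ _
        exact le_of_mul_le_mul_right h2 (mul_pos hPpos hApos)
      have htS : t ≤ t / S := by
        rw [le_div_iff₀ hSpos]
        nlinarith
      have hFS : ∀ i, F i t ≤ F i (t / S) :=
        fun i => hFmono i ht.le (le_trans ht.le htS) htS
      have step1 : (∑ i, (pr i / ∑ j, pr j) * F i t)
          ≤ ∑ i, (pr i / ∑ j, pr j) * F i (t / S) :=
        Finset.sum_le_sum fun i _ =>
          mul_le_mul_of_nonneg_left (hFS i) (ha i).1.le
      have step2 : (∑ i, (pr i / ∑ j, pr j) * F i t)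
          ≤ ∑ i, (pr i / ∑ j, pr j) * F i (t * (phi k (pr i) * ω)) :=
        le_trans step1 key
      have hmul := mul_le_mul_of_nonneg_left step2 hPpos.le
      have eL : (∑ j, pr j) * (∑ i, (pr i / ∑ j, pr j) * F i t) = ETP m pr F t := by
        rw [Finset.mul_sum]
        refine Finset.sum_congr rfl fun i _ => ?_
        field_simp
      have eR : (∑ j, pr j) * (∑ i, (pr i / ∑ j, pr j) * F i (t * (phi k (pr i) * ω)))
          = ETPw m k pr F ω t := by
        rw [Finset.mul_sum]
        refine Finset.sum_congr rfl fun i _ => ?_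
        rw [show t * (phi k (pr i) * ω) = phi k (pr i) * ω * t from mul_comm _ _]
        field_simp
      rw [eL, eR] at hmul
      exact hmul
  -- set inclusion
  have hsub : {t : ℝ | 0 < t ∧ mFDR m pr F t ≤ α}
      ⊆ {t : ℝ | 0 < t ∧ mFDRw m k pr F ω t ≤ α} := by
    rintro t ⟨ht, hle⟩
    refine ⟨ht, le_trans ?_ hle⟩
    unfold mFDR mFDRw
    have hETPnn : 0 ≤ ETP m pr F t :=
      Finset.sum_nonneg fun i _ => mul_nonneg (hpr i).1.le (hFrange i t ht.le).1
    have hden1 : 0 < (∑ i, (1 - pr i)) * t + ETP m pr F t :=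
      add_pos_of_pos_of_nonneg (mul_pos hApos ht) hETPnn
    have h2 := hkey t ht
    gcongr
  have hle1k : tOR1 ≤ tORk := by
    rw [htOR1, htORk]
    exact csSup_le_csSup hbddk hne1 hsub
  obtain ⟨t0, ht0pos, ht0⟩ := hne1
  have htOR1pos : 0 < tOR1 :=
    lt_of_lt_of_le ht0pos (htOR1 ▸ le_csSup hbdd1 ⟨ht0pos, ht0⟩)
  constructor
  · unfold ETPw
    refine Finset.sum_le_sum fun i _ => ?_
    have hc : 0 < phi k (pr i) * ω := mul_pos (hphi_pos i) hωpos
    refine mul_le_mul_of_nonneg_left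
      (hFmono i ?_ ?_ ?_) (hpr i).1.le
    · exact (mul_pos hc htOR1pos).le
    · exact (mul_pos hc (lt_of_lt_of_le htOR1pos hle1k)).le
    · exact mul_le_mul_of_nonneg_left hle1k hc.le
  · exact hkey tOR1 htOR1pos
end

section
/- Let (Ω, 𝔉, P) be a probability space, m ≥ 1 an integer, k > 0, and for each i ∈ {1,…,m} let π_i ∈ (0,1), let θ_i : Ω → {0,1} be measurable, and let p_i : Ω → [0,1] be measurable satisfying the superuniform-null condition P({p_i ≤ u} ∩ {θ_i = 0}) ≤ (1−π_i)·u for all u ∈ [0,1]. Define the weighted p-values p_w,i = min(((1−π_i)/π_i)^{1/k}·p_i, 1) and φ_k(x) = (x/(1−x))^{1/k}. Then for every c ∈ [0,1): E[ Σ_{i=1}^m 1{θ_i = 0}·1{p_w,i ≤ c} ] ≤ Σ_{i=1}^m (1−π_i)·φ_k(π_i)·c. -/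
open scoped BigOperators Classical
open MeasureTheory

/-- The EFP bound from Section 2.4 of the paper: if each p-value is superuniform on
the null, i.e. `P({p_i ≤ u} ∩ {θ_i = 0}) ≤ (1−π_i)·u` for `u ∈ [0,1]`, then for any
threshold `c ∈ [0,1)` the expected number of true nulls whose weighted p-value
`p_{w,i} = min(((1−π_i)/π_i)^{1/k}·p_i, 1)` falls below `c` is at most
`Σ_i (1−π_i)·φ_k(π_i)·c`, where `φ_k(x) = (x/(1−x))^{1/k}`. -/
theorem straw_EFP_bound {Ω : Type*} [MeasurableSpace Ω]
    (P : Measure Ω) [IsProbabilityMeasure P]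
    (m : ℕ) (hm : 1 ≤ m) (k : ℝ) (hk : 0 < k)
    (pr : Fin m → ℝ) (hpr : ∀ i, pr i ∈ Set.Ioo (0 : ℝ) 1)
    (θ : Fin m → Ω → ℕ) (hθmeas : ∀ i, Measurable (θ i))
    (hθ01 : ∀ i ω, θ i ω = 0 ∨ θ i ω = 1)
    (p : Fin m → Ω → ℝ) (hpmeas : ∀ i, Measurable (p i))
    (hp01 : ∀ i ω, p i ω ∈ Set.Icc (0 : ℝ) 1)
    (hsuper : ∀ i, ∀ u ∈ Set.Icc (0 : ℝ) 1,
      P ({ω | p i ω ≤ u} ∩ {ω | θ i ω = 0}) ≤ ENNReal.ofReal ((1 - pr i) * u)) :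
    ∀ c ∈ Set.Ico (0 : ℝ) 1,
      (∫ ω, (∑ i, if θ i ω = 0 ∧ min (((1 - pr i) / pr i) ^ (1 / k) * p i ω) 1 ≤ c
          then (1 : ℝ) else 0) ∂P) ≤
        ∑ i, (1 - pr i) * (pr i / (1 - pr i)) ^ (1 / k) * c := by
  intro c hc
  obtain ⟨hc0, hc1⟩ := hc
  set w : Fin m → ℝ := fun i => ((1 - pr i) / pr i) ^ (1 / k) with hw
  have hwpos : ∀ i, 0 < w i := by
    intro i
    have h := hpr i
    exact Real.rpow_pos_of_pos (div_pos (by linarith [h.2]) h.1) _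
  set A : Fin m → Set Ω := fun i => {ω | θ i ω = 0 ∧ min (w i * p i ω) 1 ≤ c} with hA
  have hAmeas : ∀ i, MeasurableSet (A i) := by
    intro i
    have h1 : MeasurableSet {ω | θ i ω = 0} := (hθmeas i) (measurableSet_singleton 0)
    have h2 : MeasurableSet {ω | min (w i * p i ω) 1 ≤ c} := by
      have : Measurable fun ω => min (w i * p i ω) 1 :=
        ((measurable_const.mul (hpmeas i)).min measurable_const)
      exact this measurableSet_Iic
    exact h1.inter h2
  have key : ∀ i, (∫ ω, (A i).indicator (fun _ => (1:ℝ)) ω ∂P)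
      ≤ (1 - pr i) * (pr i / (1 - pr i)) ^ (1 / k) * c := by
    intro i
    have h := hpr i
    have h1π : 0 < 1 - pr i := by linarith [h.2]
    have hwi := hwpos i
    rw [integral_indicator_const (1:ℝ) (hAmeas i), smul_eq_mul, mul_one]
    -- the target real number
    have hinv : (pr i / (1 - pr i)) ^ (1 / k) = (w i)⁻¹ := by
      rw [hw]
      rw [← Real.inv_rpow (div_nonneg h1π.le h.1.le), inv_div]
    set u : ℝ := min (c / w i) 1 with hu
    have hu01 : u ∈ Set.Icc (0:ℝ) 1 :=
      ⟨le_min (by positivity) zero_le_one, min_le_right _ _⟩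
    have hsub : A i ⊆ {ω | p i ω ≤ u} ∩ {ω | θ i ω = 0} := by
      intro ω hω
      obtain ⟨hθ0, hmin⟩ := hω
      have hwp : w i * p i ω ≤ c := by
        rcases min_cases (w i * p i ω) 1 with ⟨he, _⟩ | ⟨he, hle⟩
        · rwa [he] at hmin
        · rw [he] at hmin; linarith
      refine ⟨le_min ?_ (hp01 i ω).2, hθ0⟩
      rw [le_div_iff₀ hwi, mul_comm]
      exact hwp
    have hle : P (A i) ≤ ENNReal.ofReal ((1 - pr i) * u) :=
      le_trans (measure_mono hsub) (hsuper i u hu01)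
    have hle2 : (1 - pr i) * u ≤ (1 - pr i) * (pr i / (1 - pr i)) ^ (1 / k) * c := by
      rw [hinv, mul_assoc]
      refine mul_le_mul_of_nonneg_left ?_ h1π.le
      calc u ≤ c / w i := min_le_left _ _
        _ = (w i)⁻¹ * c := by rw [div_eq_inv_mul]
    have hnn : (0:ℝ) ≤ (1 - pr i) * (pr i / (1 - pr i)) ^ (1 / k) * c :=
      mul_nonneg (mul_nonneg h1π.le (Real.rpow_nonneg (div_nonneg h.1.le h1π.le) _)) hc0
    exact ENNReal.toReal_le_of_le_ofReal hnn
      (hle.trans (ENNReal.ofReal_le_ofReal hle2))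
  have hintg : ∀ i : Fin m, Integrable ((A i).indicator (fun _ => (1:ℝ))) P :=
    fun i => (integrable_const 1).indicator (hAmeas i)
  have heq : (∫ ω, (∑ i, if θ i ω = 0 ∧ min (((1 - pr i) / pr i) ^ (1 / k) * p i ω) 1 ≤ c
      then (1 : ℝ) else 0) ∂P)
      = ∑ i, ∫ ω, (A i).indicator (fun _ => (1:ℝ)) ω ∂P := by
    rw [← integral_finset_sum _ (fun i _ => hintg i)]
    congr 1
    funext ω
    congr 1
    funext i
    rw [Set.indicator_apply]
    rfl
  rw [heq]
  exact Finset.sum_le_sum fun i _ => key i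
end
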